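/- For any upper radial f : E → [0,∞], epi f^Γ ⊆ Γ(hypo f); likewise, for any lower radial f, hypo f_Γ ⊆ Γ(epi f). If moreover for every y ∈ E the map v ↦ f^p(y,v) is strictly increasing on {v > 0 : 0 < f^p(y,v) < ∞}, then equality holds in both inclusions. -/
import Mathlib


open Set
open scoped ENNReal RealInnerProductSpace

noncomputable section

variable {E : Type*} [NormedAddCommGroup E] [InnerProductSpace ℝ E] [FiniteDimensional ℝ E]

/-- The radial point transformation `Γ(x,u) = (x/u, 1/u)`. -/
def radialPoint (p : E × ℝ) : E × ℝ := (p.2⁻¹ • p.1, p.2⁻¹)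

/-- The radial set transformation `ΓS = {Γ(x,u) : (x,u) ∈ S}`. -/
def radialSet (S : Set (E × ℝ)) : Set (E × ℝ) := radialPoint '' S

/-- The perspective function `f^p(y,v) = v·f(y/v)` (for `v > 0`). -/
def persp (f : E → ℝ≥0∞) (y : E) (v : ℝ) : ℝ≥0∞ := ENNReal.ofReal v * f (v⁻¹ • y)

/-- The epigraph `epi f = {(x,u) ∈ E × ℝ₊₊ : f(x) ≤ u}`. -/
def epiSet (f : E → ℝ≥0∞) : Set (E × ℝ) :=
  {p : E × ℝ | 0 < p.2 ∧ f p.1 ≤ ENNReal.ofReal p.2}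

/-- The hypograph `hypo f = {(x,u) ∈ E × ℝ₊₊ : f(x) ≥ u}`. -/
def hypoSet (f : E → ℝ≥0∞) : Set (E × ℝ) :=
  {p : E × ℝ | 0 < p.2 ∧ ENNReal.ofReal p.2 ≤ f p.1}

/-- The upper radial transformation `f^Γ(y) = sup{v > 0 : v·f(y/v) ≤ 1}` (`sup ∅ = 0`). -/
def radSup (f : E → ℝ≥0∞) (y : E) : ℝ≥0∞ :=
  ⨆ (v : ℝ) (_ : 0 < v) (_ : persp f y v ≤ 1), ENNReal.ofReal v

/-- The lower radial transformation `f_Γ(y) = inf{v > 0 : v·f(y/v) ≥ 1}` (`inf ∅ = ∞`). -/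
def radInf (f : E → ℝ≥0∞) (y : E) : ℝ≥0∞ :=
  ⨅ (v : ℝ) (_ : 0 < v) (_ : 1 ≤ persp f y v), ENNReal.ofReal v

/-- `f` is upper radial: every `f^p(y,·)` is nondecreasing and upper semicontinuous on `ℝ₊₊`. -/
def UpperRadial (f : E → ℝ≥0∞) : Prop :=
  ∀ y : E, MonotoneOn (persp f y) (Ioi (0 : ℝ)) ∧
    UpperSemicontinuousOn (persp f y) (Ioi (0 : ℝ))

/-- `f` is lower radial: every `f^p(y,·)` is nondecreasing and lower semicontinuous on `ℝ₊₊`. -/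
def LowerRadial (f : E → ℝ≥0∞) : Prop :=
  ∀ y : E, MonotoneOn (persp f y) (Ioi (0 : ℝ)) ∧
    LowerSemicontinuousOn (persp f y) (Ioi (0 : ℝ))

/-- Every `f^p(y,·)` is strictly increasing on its domain `{v > 0 : 0 < f^p(y,v) < ∞}`. -/
def StrictPersp (f : E → ℝ≥0∞) : Prop :=
  ∀ y : E, StrictMonoOn (persp f y)
    {v : ℝ | 0 < v ∧ 0 < persp f y v ∧ persp f y v ≠ ⊤}

open Topology Filter

set_option linter.unusedSectionVars false in
lemma persp_le_one_iff (f : E → ℝ≥0∞) (y : E) {u : ℝ} (hu : 0 < u) :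
    persp f y u ≤ 1 ↔ f (u⁻¹ • y) ≤ ENNReal.ofReal u⁻¹ := by
  have h0 : ENNReal.ofReal u ≠ 0 := (ENNReal.ofReal_pos.2 hu).ne'
  have ht : ENNReal.ofReal u ≠ ⊤ := ENNReal.ofReal_ne_top
  rw [ENNReal.ofReal_inv_of_pos hu, persp, ← ENNReal.mul_inv_cancel h0 ht,
    ENNReal.mul_le_mul_iff_right h0 ht]

set_option linter.unusedSectionVars false in
lemma one_le_persp_iff (f : E → ℝ≥0∞) (y : E) {u : ℝ} (hu : 0 < u) :
    1 ≤ persp f y u ↔ ENNReal.ofReal u⁻¹ ≤ f (u⁻¹ • y) := by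
  have h0 : ENNReal.ofReal u ≠ 0 := (ENNReal.ofReal_pos.2 hu).ne'
  have ht : ENNReal.ofReal u ≠ ⊤ := ENNReal.ofReal_ne_top
  rw [ENNReal.ofReal_inv_of_pos hu, persp, ← ENNReal.mul_inv_cancel h0 ht,
    ENNReal.mul_le_mul_iff_right h0 ht]

set_option linter.unusedSectionVars false in
lemma radialPoint_inv {y : E} {u : ℝ} (hu : u ≠ 0) :
    radialPoint ((u⁻¹ • y : E), u⁻¹) = (y, u) := by
  simp [radialPoint, inv_inv, smul_inv_smul₀ hu]

set_option linter.unusedSectionVars false in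
lemma fwd1 (f : E → ℝ≥0∞) (hf : UpperRadial f) :
    epiSet (radSup f) ⊆ radialSet (hypoSet f) := by
  rintro ⟨y, u⟩ ⟨hu, hle⟩
  have key : 1 ≤ persp f y u := by
    by_contra h
    push_neg at h
    have husc := (hf y).2 u (mem_Ioi.2 hu) 1 h
    rw [nhdsWithin_eq_nhds.2 (isOpen_Ioi.mem_nhds hu)] at husc
    have h2 : ∀ᶠ v in 𝓝[>] u, persp f y v < 1 := nhdsWithin_le_nhds husc
    obtain ⟨v, hpv, hv⟩ := (h2.and self_mem_nhdsWithin).exists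
    have hv0 : (0 : ℝ) < v := hu.trans hv
    have hle' : ENNReal.ofReal v ≤ radSup f y :=
      le_iSup_of_le v (le_iSup_of_le hv0 (le_iSup_of_le hpv.le le_rfl))
    exact absurd (hle'.trans hle) (not_le.2 ((ENNReal.ofReal_lt_ofReal_iff hv0).2 hv))
  exact ⟨(u⁻¹ • y, u⁻¹), ⟨inv_pos.2 hu, (one_le_persp_iff f y hu).1 key⟩,
    radialPoint_inv hu.ne'⟩

set_option linter.unusedSectionVars false in
lemma fwd2 (f : E → ℝ≥0∞) (hf : LowerRadial f) :
    hypoSet (radInf f) ⊆ radialSet (epiSet f) := by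
  rintro ⟨y, u⟩ ⟨hu, hle⟩
  have key : persp f y u ≤ 1 := by
    by_contra h
    push_neg at h
    have hlsc := (hf y).2 u (mem_Ioi.2 hu) 1 h
    rw [nhdsWithin_eq_nhds.2 (isOpen_Ioi.mem_nhds hu)] at hlsc
    have h0 : ∀ᶠ v in 𝓝 u, (0 : ℝ) < v := isOpen_Ioi.eventually_mem hu
    have h2 : ∀ᶠ v in 𝓝[<] u, 1 < persp f y v ∧ (0 : ℝ) < v :=
      nhdsWithin_le_nhds (hlsc.and h0)
    obtain ⟨v, ⟨hpv, hv0⟩, hv⟩ := (h2.and self_mem_nhdsWithin).exists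
    have hle' : radInf f y ≤ ENNReal.ofReal v :=
      iInf_le_of_le v (iInf_le_of_le hv0 (iInf_le_of_le hpv.le le_rfl))
    exact absurd (hle.trans hle') (not_le.2 ((ENNReal.ofReal_lt_ofReal_iff hu).2 hv))
  exact ⟨(u⁻¹ • y, u⁻¹), ⟨inv_pos.2 hu, (persp_le_one_iff f y hu).1 key⟩,
    radialPoint_inv hu.ne'⟩

set_option linter.unusedSectionVars false in
lemma bwd1 (f : E → ℝ≥0∞) (hs : StrictPersp f) (hf : UpperRadial f) :
    radialSet (hypoSet f) ⊆ epiSet (radSup f) := by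
  rintro p ⟨⟨x, w⟩, ⟨hw, hwf⟩, rfl⟩
  refine ⟨inv_pos.2 hw, ?_⟩
  set y : E := w⁻¹ • x
  set u : ℝ := w⁻¹ with hu_def
  have hu : 0 < u := inv_pos.2 hw
  have hxy : u⁻¹ • y = x := by
    simp only [hu_def, inv_inv, y]
    exact smul_inv_smul₀ hw.ne' x
  have hpu : 1 ≤ persp f y u := by
    rw [persp, hxy]
    calc (1 : ℝ≥0∞) = ENNReal.ofReal u * ENNReal.ofReal w := by
          rw [← ENNReal.ofReal_mul hu.le, hu_def, inv_mul_cancel₀ hw.ne',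
            ENNReal.ofReal_one]
      _ ≤ ENNReal.ofReal u * f x :=
          mul_le_mul_right hwf _
  refine iSup_le fun v => iSup_le fun hv => iSup_le fun hpv => ?_
  refine ENNReal.ofReal_le_ofReal ?_
  by_contra hvu
  push_neg at hvu
  have hmono := (hf y).1 (mem_Ioi.2 hu) (mem_Ioi.2 hv) hvu.le
  have heq_u : persp f y u = 1 := le_antisymm (hmono.trans hpv) hpu
  have heq_v : persp f y v = 1 := le_antisymm hpv (hpu.trans hmono)
  have := hs y ⟨hu, by rw [heq_u]; exact ⟨one_pos, ENNReal.one_ne_top⟩⟩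
    ⟨hv, by rw [heq_v]; exact ⟨one_pos, ENNReal.one_ne_top⟩⟩ hvu
  rw [heq_u, heq_v] at this
  exact lt_irrefl _ this

set_option linter.unusedSectionVars false in
lemma bwd2 (f : E → ℝ≥0∞) (hs : StrictPersp f) (hf : LowerRadial f) :
    radialSet (epiSet f) ⊆ hypoSet (radInf f) := by
  rintro p ⟨⟨x, w⟩, ⟨hw, hwf⟩, rfl⟩
  refine ⟨inv_pos.2 hw, ?_⟩
  set y : E := w⁻¹ • x
  set u : ℝ := w⁻¹ with hu_def
  have hu : 0 < u := inv_pos.2 hw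
  have hxy : u⁻¹ • y = x := by
    simp only [hu_def, inv_inv, y]
    exact smul_inv_smul₀ hw.ne' x
  have hpu : persp f y u ≤ 1 := by
    rw [persp, hxy]
    calc ENNReal.ofReal u * f x ≤ ENNReal.ofReal u * ENNReal.ofReal w :=
          mul_le_mul_right hwf _
      _ = 1 := by
          rw [← ENNReal.ofReal_mul hu.le, hu_def, inv_mul_cancel₀ hw.ne',
            ENNReal.ofReal_one]
  refine le_iInf fun v => le_iInf fun hv => le_iInf fun hpv => ?_
  refine ENNReal.ofReal_le_ofReal ?_
  by_contra hvu
  push_neg at hvu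
  have hmono := (hf y).1 (mem_Ioi.2 hv) (mem_Ioi.2 hu) hvu.le
  have heq_u : persp f y u = 1 := le_antisymm hpu (hpv.trans hmono)
  have heq_v : persp f y v = 1 := le_antisymm (hmono.trans hpu) hpv
  have := hs y ⟨hv, by rw [heq_v]; exact ⟨one_pos, ENNReal.one_ne_top⟩⟩
    ⟨hu, by rw [heq_u]; exact ⟨one_pos, ENNReal.one_ne_top⟩⟩ hvu
  rw [heq_u, heq_v] at this
  exact lt_irrefl _ this

/-- For upper radial `f`, `epi f^Γ ⊆ Γ(hypo f)`; for lower radial `f`,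
`hypo f_Γ ⊆ Γ(epi f)`; and equality holds in both when every `f^p(y,·)` is strictly
increasing on its domain. -/
theorem epi_hypo_inclusion (f : E → ℝ≥0∞) :
    (UpperRadial f → epiSet (radSup f) ⊆ radialSet (hypoSet f)) ∧
    (LowerRadial f → hypoSet (radInf f) ⊆ radialSet (epiSet f)) ∧
    (StrictPersp f →
      (UpperRadial f → epiSet (radSup f) = radialSet (hypoSet f)) ∧
      (LowerRadial f → hypoSet (radInf f) = radialSet (epiSet f))) := by
  exact ⟨fwd1 f, fwd2 f, fun hs =>
    ⟨fun hf => Set.Subset.antisymm (fwd1 f hf) (bwd1 f hs hf),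
     fun hf => Set.Subset.antisymm (fwd2 f hf) (bwd2 f hs hf)⟩⟩
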